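/- arXiv:2106.02424 — 8 statements merged into one kernel-verified Lean document; each statement's English description precedes it below -/
import Mathlib

section
/- Let δ > 0 be a real number satisfying δ = e^{−(δ+1)}. Then for every ε > 0 and every x ∈ ℝ, the inequalities 0 ≤ |x| − x·tanh(x/ε) ≤ δ·ε hold. -/
/-- Let `δ > 0` satisfy `δ = e^{-(δ+1)}`. Then for every `ε > 0` and every `x ∈ ℝ`,
`0 ≤ |x| - x * tanh (x / ε) ≤ δ * ε`. -/
theorem tanh_abs_bound (δ : ℝ) (hδpos : 0 < δ) (hδ : δ = Real.exp (-(δ + 1))) :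
    ∀ ε > (0 : ℝ), ∀ x : ℝ,
      0 ≤ |x| - x * Real.tanh (x / ε) ∧ |x| - x * Real.tanh (x / ε) ≤ δ * ε := by
  -- Key inequality: ∀ s, s ≤ δ * exp s + δ
  have key : ∀ s : ℝ, s ≤ δ * Real.exp s + δ := by
    intro s
    have h1 : s - δ - 1 + 1 ≤ Real.exp (s - δ - 1) := Real.add_one_le_exp _
    have h2 : Real.exp (s - δ - 1) = Real.exp s * Real.exp (-(δ + 1)) := by
      rw [← Real.exp_add]; ring_nf
    nlinarith [Real.exp_pos s]
  have main : ∀ t : ℝ, 0 ≤ |t| - t * Real.tanh t ∧ |t| - t * Real.tanh t ≤ δ := by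
    intro t
    have ha := Real.exp_pos t
    have hb := Real.exp_pos (-t)
    have hab : 0 < Real.exp t + Real.exp (-t) := by linarith
    have htanh : Real.tanh t = (Real.exp t - Real.exp (-t)) / (Real.exp t + Real.exp (-t)) := by
      rw [Real.tanh_eq_sinh_div_cosh, Real.sinh_eq, Real.cosh_eq]
      field_simp
    have habs : |Real.tanh t| ≤ 1 := by
      rw [htanh, abs_div, abs_of_pos hab, div_le_one hab]
      cases abs_cases (Real.exp t - Real.exp (-t)) with
      | inl h => linarith [h.1]
      | inr h => linarith [h.1]
    constructor
    · have : t * Real.tanh t ≤ |t| := by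
        calc t * Real.tanh t ≤ |t * Real.tanh t| := le_abs_self _
        _ = |t| * |Real.tanh t| := abs_mul _ _
        _ ≤ |t| * 1 := mul_le_mul_of_nonneg_left habs (abs_nonneg t)
        _ = |t| := mul_one _
      linarith
    · rw [htanh]
      rcases le_or_gt 0 t with ht | ht
      · rw [abs_of_nonneg ht]
        have hK := key (2 * t)
        have he2 : Real.exp (2 * t) * Real.exp (-t) = Real.exp t := by
          rw [← Real.exp_add]; ring_nf
        have heq : t - t * ((Real.exp t - Real.exp (-t)) / (Real.exp t + Real.exp (-t)))
            = (t * (Real.exp t + Real.exp (-t)) - t * (Real.exp t - Real.exp (-t)))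
              / (Real.exp t + Real.exp (-t)) := by
          field_simp
        rw [heq, div_le_iff₀ hab]
        nlinarith [mul_nonneg (by linarith : (0:ℝ) ≤ δ * Real.exp (2 * t) + δ - 2 * t) hb.le]
      · rw [abs_of_neg ht]
        have hK := key (-(2 * t))
        have he2 : Real.exp (-(2 * t)) * Real.exp t = Real.exp (-t) := by
          rw [← Real.exp_add]; ring_nf
        have heq : -t - t * ((Real.exp t - Real.exp (-t)) / (Real.exp t + Real.exp (-t)))
            = (-t * (Real.exp t + Real.exp (-t)) - t * (Real.exp t - Real.exp (-t)))
              / (Real.exp t + Real.exp (-t)) := by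
          field_simp
        rw [heq, div_le_iff₀ hab]
        nlinarith [mul_nonneg (by linarith : (0:ℝ) ≤ δ * Real.exp (-(2 * t)) + δ + 2 * t) ha.le]
  intro ε hε x
  obtain ⟨h1, h2⟩ := main (x / ε)
  have habs : |x| = |x / ε| * ε := by
    rw [abs_div, abs_of_pos hε, div_mul_cancel₀ _ hε.ne']
  have he1 : ε * |x / ε| = |x| := by rw [habs]; ring
  have he2 : ε * (x / ε) = x := by field_simp
  have key2 : |x| - x * Real.tanh (x / ε)
      = ε * (|x / ε| - x / ε * Real.tanh (x / ε)) := by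
    rw [mul_sub, he1, ← mul_assoc, he2]
  rw [key2]
  constructor
  · exact mul_nonneg hε.le h1
  · calc ε * (|x / ε| - x / ε * Real.tanh (x / ε)) ≤ ε * δ :=
        mul_le_mul_of_nonneg_left h2 hε.le
    _ = δ * ε := mul_comm _ _
end

section
/- Let V : [0,∞) → ℝ be differentiable with V(t) ≥ 0 for all t ≥ 0, and suppose there exist constants a > 0 and b ≥ 0 such that V'(t) ≤ −a·√(V(t)) + b for all t ≥ 0. Fix v ∈ (0,1) and set Ω = b/((1−v)·a). If √(V(0)) ≥ Ω, then V(t) ≤ Ω² for all t ≥ T_s, where T_s = (2/(a·v))·(√(V(0)) − Ω). -/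
/-! Wherever `√V ≥ X ≥ Ω`, the inequality `V' ≤ -a √V + b` with `b = (1 - v) a Ω` gives
`V' ≤ -v a X`. Hence the barrier `(√V(0) - v a t / 2)²`, whose derivative is
`-v a (√V(0) - v a t / 2)`, dominates `V` until it reaches `Ω²` at time `T_s`; from then on the
constant `Ω²` is a barrier, because `V' ≤ -v a Ω ≤ 0` wherever `V ≥ Ω²`. Both comparisons are
non-strict, so they are run against barriers tilted upwards by `ε (t - t₀)`, letting `ε → 0`. -/

open Set Filter Topology

theorem image_le_of_deriv_right_le_deriv_boundary_of_le {f f' : ℝ → ℝ} {a b : ℝ}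
    (hf : ContinuousOn f (Icc a b)) (hf' : ∀ x ∈ Ico a b, HasDerivWithinAt f (f' x) (Ici x) x)
    {B B' : ℝ → ℝ} (ha : f a ≤ B a) (hB : ∀ x, HasDerivAt B (B' x) x)
    (bound : ∀ x ∈ Ico a b, B x ≤ f x → f' x ≤ B' x) : ∀ ⦃x⦄, x ∈ Icc a b → f x ≤ B x := by
  intro x hx
  have tilted : ∀ ε > 0, f x ≤ B x + ε * (x - a) := by
    intro ε hε
    refine image_le_of_deriv_right_lt_deriv_boundary hf hf' (B := fun y => B y + ε * (y - a))
      (B' := fun y => B' y + ε) (by simpa using ha)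
      (fun y => ((hB y).add (((hasDerivAt_id y).sub_const a).const_mul ε)).congr_deriv
        (by ring)) (fun y hy hfy => ?_) hx
    have hBf : B y ≤ f y := by nlinarith [hy.1]
    exact (bound y hy hBf).trans_lt (lt_add_of_pos_right _ hε)
  have hlim : Tendsto (fun ε => B x + ε * (x - a)) (𝓝[>] 0) (𝓝 (B x)) :=
    tendsto_nhdsWithin_of_tendsto_nhds <|
      (by fun_prop : Continuous fun ε : ℝ => B x + ε * (x - a)).tendsto' 0 _ (by simp)
  exact ge_of_tendsto hlim (eventually_nhdsWithin_of_forall tilted)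

theorem neg_mul_sqrt_add_le {a v Ω X y : ℝ} (ha : 0 ≤ a) (hv : v ≤ 1) (hΩX : Ω ≤ X)
    (hXy : X ^ 2 ≤ y) : -a * √y + (1 - v) * a * Ω ≤ -(v * a) * X := by
  have hX : X ≤ √y := Real.le_sqrt_of_sq_le hXy
  have h1a : 0 ≤ (1 - v) * a := mul_nonneg (sub_nonneg.2 hv) ha
  nlinarith [mul_le_mul_of_nonneg_left hX ha, mul_le_mul_of_nonneg_left hΩX h1a]

section Decay

variable {V V' : ℝ → ℝ} {k Ω : ℝ}

theorem le_sq_sub_mul_of_decay (hV : ∀ t ≥ 0, HasDerivAt V (V' t) t)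
    (hdecay : ∀ t ≥ 0, ∀ X, Ω ≤ X → X ^ 2 ≤ V t → V' t ≤ -k * X) (hk : 0 ≤ k) {s T : ℝ}
    (h0 : V 0 ≤ s ^ 2) (hT : Ω ≤ s - k / 2 * T) : ∀ t ∈ Icc 0 T, V t ≤ (s - k / 2 * t) ^ 2 := by
  refine image_le_of_deriv_right_le_deriv_boundary_of_le
    (fun y hy => (hV y hy.1).continuousAt.continuousWithinAt)
    (fun y hy => (hV y hy.1).hasDerivWithinAt) (by simpa using h0)
    (B' := fun y => -k * (s - k / 2 * y))
    (fun y => (((hasDerivAt_id y).const_mul (k / 2)).const_sub s).pow 2 |>.congr_deriv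
      (by simp only [id_eq]; ring))
    (fun y hy hVy => hdecay y hy.1 _ (by nlinarith [hy.2]) hVy)

theorem le_sq_of_decay (hV : ∀ t ≥ 0, HasDerivAt V (V' t) t)
    (hdecay : ∀ t ≥ 0, ∀ X, Ω ≤ X → X ^ 2 ≤ V t → V' t ≤ -k * X) (hk : 0 ≤ k) (hΩ : 0 ≤ Ω)
    {T : ℝ} (hT : 0 ≤ T) (hVT : V T ≤ Ω ^ 2) : ∀ t ≥ T, V t ≤ Ω ^ 2 := by
  intro t ht
  refine image_le_of_deriv_right_le_deriv_boundary_of_le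
    (fun y hy => (hV y (hT.trans hy.1)).continuousAt.continuousWithinAt)
    (fun y hy => (hV y (hT.trans hy.1)).hasDerivWithinAt) hVT
    (fun _ => hasDerivAt_const _ _) (fun y hy hVy => ?_) ⟨ht, le_rfl⟩
  calc V' y ≤ -k * Ω := hdecay y (hT.trans hy.1) Ω le_rfl hVy
    _ ≤ 0 := by nlinarith

end Decay

/-- SGPFS comparison lemma with explicit convergence time: if `V ≥ 0` is differentiable
on `[0,∞)` with `V' ≤ -a √V + b` (`a > 0`, `b ≥ 0`), `v ∈ (0,1)`,
`Ω = b / ((1 - v) a)` and `√(V 0) ≥ Ω`, then `V t ≤ Ω²` for all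
`t ≥ T_s = (2 / (a v)) (√(V 0) - Ω)`. -/
theorem sgpfs_comparison (V V' : ℝ → ℝ)
    (hV : ∀ t ≥ (0 : ℝ), HasDerivAt V (V' t) t)
    (hVnonneg : ∀ t ≥ (0 : ℝ), 0 ≤ V t)
    (a b : ℝ) (ha : 0 < a) (hb : 0 ≤ b)
    (hineq : ∀ t ≥ (0 : ℝ), V' t ≤ -a * Real.sqrt (V t) + b)
    (v : ℝ) (hv0 : 0 < v) (hv1 : v < 1)
    (Ω Ts : ℝ) (hΩ : Ω = b / ((1 - v) * a))
    (h0 : Ω ≤ Real.sqrt (V 0))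
    (hTs : Ts = (2 / (a * v)) * (Real.sqrt (V 0) - Ω)) :
    ∀ t ≥ Ts, V t ≤ Ω ^ 2 := by
  have h1v : 0 < (1 - v) * a := mul_pos (sub_pos.2 hv1) ha
  have hbΩ : b = (1 - v) * a * Ω := by rw [hΩ, mul_div_cancel₀ _ h1v.ne']
  have hΩ0 : 0 ≤ Ω := hΩ ▸ by positivity
  have hTs0 : 0 ≤ Ts := hTs ▸ mul_nonneg (by positivity) (sub_nonneg.2 h0)
  have hk : 0 ≤ v * a := by positivity
  have hdecay : ∀ t ≥ 0, ∀ X, Ω ≤ X → X ^ 2 ≤ V t → V' t ≤ -(v * a) * X :=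
    fun t ht X hX hXV => (hineq t ht).trans (hbΩ ▸ neg_mul_sqrt_add_le ha.le hv1.le hX hXV)
  have hΩTs : √(V 0) - v * a / 2 * Ts = Ω := by
    rw [hTs]; field_simp; ring
  have hVTs : V Ts ≤ Ω ^ 2 := by
    simpa [hΩTs] using le_sq_sub_mul_of_decay hV hdecay hk
      (Real.sq_sqrt (hVnonneg 0 le_rfl)).ge hΩTs.ge Ts ⟨hTs0, le_rfl⟩
  exact le_sq_of_decay hV hdecay hk hΩ0 hTs0 hVTs
end

section
/- The contour moment φ₁ = η_{20} + η_{02} is invariant under rotation: for every θ ∈ ℝ, if η'_{ij} denote the central contour moments of the rotated points R_θ(c_1),…,R_θ(c_N), then η'_{20} + η'_{02} = η_{20} + η_{02}. -/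
/-- Arc-length weight `Δm_k = ‖c_k - c_{k-1}‖` (Euclidean distance between adjacent
contour points, indices taken modulo `N`). -/
noncomputable def dm (N : ℕ) [NeZero N] (c : ZMod N → ℝ × ℝ) (k : ZMod N) : ℝ :=
  Real.sqrt (((c k).1 - (c (k - 1)).1) ^ 2 + ((c k).2 - (c (k - 1)).2) ^ 2)

/-- Ordinary contour moment `h_{ij} = Σ_k u_k^i v_k^j Δm_k`. -/
noncomputable def hmom (N : ℕ) [NeZero N] (c : ZMod N → ℝ × ℝ) (i j : ℕ) : ℝ :=
  ∑ k : ZMod N, (c k).1 ^ i * (c k).2 ^ j * dm N c k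

/-- Central contour moment
`η_{ij} = Σ_k (u_k - ū)^i (v_k - v̄)^j Δm_k`, with centroid
`ū = h_{10}/h_{00}`, `v̄ = h_{01}/h_{00}`. -/
noncomputable def eta (N : ℕ) [NeZero N] (c : ZMod N → ℝ × ℝ) (i j : ℕ) : ℝ :=
  ∑ k : ZMod N,
    ((c k).1 - hmom N c 1 0 / hmom N c 0 0) ^ i *
      ((c k).2 - hmom N c 0 1 / hmom N c 0 0) ^ j * dm N c k

/-- Rotation of the plane by angle `θ` about the origin. -/
noncomputable def rot (θ : ℝ) (p : ℝ × ℝ) : ℝ × ℝ :=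
  (p.1 * Real.cos θ - p.2 * Real.sin θ, p.1 * Real.sin θ + p.2 * Real.cos θ)

/-- Rotation invariance of the contour moment. -/
theorem phi1_rotation_invariant (N : ℕ) [NeZero N] (c : ZMod N → ℝ × ℝ)
    (h00 : hmom N c 0 0 ≠ 0) (θ : ℝ) :
    eta N (fun k => rot θ (c k)) 2 0 + eta N (fun k => rot θ (c k)) 0 2
      = eta N c 2 0 + eta N c 0 2 := by
  have hdm : ∀ k, dm N (fun k => rot θ (c k)) k = dm N c k := by
    intro k
    unfold dm rot
    congr 1
    linear_combination (((c k).1 - (c (k-1)).1)^2 + ((c k).2 - (c (k-1)).2)^2) *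
      (Real.sin_sq_add_cos_sq θ)
  have h00' : hmom N (fun k => rot θ (c k)) 0 0 = hmom N c 0 0 := by
    unfold hmom
    exact Finset.sum_congr rfl fun k _ => by rw [hdm]; simp
  have h10' : hmom N (fun k => rot θ (c k)) 1 0
      = Real.cos θ * hmom N c 1 0 - Real.sin θ * hmom N c 0 1 := by
    unfold hmom
    rw [Finset.mul_sum, Finset.mul_sum, ← Finset.sum_sub_distrib]
    refine Finset.sum_congr rfl fun k _ => ?_
    rw [hdm]; simp only [rot]; ring
  have h01' : hmom N (fun k => rot θ (c k)) 0 1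
      = Real.sin θ * hmom N c 1 0 + Real.cos θ * hmom N c 0 1 := by
    unfold hmom
    rw [Finset.mul_sum, Finset.mul_sum, ← Finset.sum_add_distrib]
    refine Finset.sum_congr rfl fun k _ => ?_
    rw [hdm]; simp only [rot]; ring
  unfold eta
  rw [h00', h10', h01', ← Finset.sum_add_distrib, ← Finset.sum_add_distrib]
  refine Finset.sum_congr rfl fun k _ => ?_
  rw [hdm]
  simp only [rot]
  linear_combination (((c k).1 - hmom N c 1 0 / hmom N c 0 0)^2 +
    ((c k).2 - hmom N c 0 1 / hmom N c 0 0)^2) * dm N c k * (Real.sin_sq_add_cos_sq θ)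
end

section
/- The contour moment φ₂ = (η_{20} − η_{02})² + 4η_{11}² is invariant under rotation: for every θ ∈ ℝ, if η'_{ij} denote the central contour moments of the rotated points R_θ(c_1),…,R_θ(c_N), then (η'_{20} − η'_{02})² + 4(η'_{11})² = (η_{20} − η_{02})² + 4η_{11}². -/
/-- Rotation invariance of the contour moment. -/
theorem phi2_rotation_invariant (N : ℕ) [NeZero N] (c : ZMod N → ℝ × ℝ)
    (h00 : hmom N c 0 0 ≠ 0) (θ : ℝ) :
    (eta N (fun k => rot θ (c k)) 2 0 - eta N (fun k => rot θ (c k)) 0 2) ^ 2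
        + 4 * (eta N (fun k => rot θ (c k)) 1 1) ^ 2
      = (eta N c 2 0 - eta N c 0 2) ^ 2 + 4 * (eta N c 1 1) ^ 2 := by
  set s := Real.sin θ with hs
  set co := Real.cos θ with hco
  have hsc : s ^ 2 + co ^ 2 = 1 := Real.sin_sq_add_cos_sq θ
  set c' := fun k => rot θ (c k) with hc'
  have hdm : ∀ k, dm N c' k = dm N c k := by
    intro k
    unfold dm
    congr 1
    simp only [hc', rot, ← hs, ← hco]
    linear_combination (((c k).1 - (c (k-1)).1)^2 + ((c k).2 - (c (k-1)).2)^2) * hsc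
  have h00' : hmom N c' 0 0 = hmom N c 0 0 := by
    unfold hmom
    exact Finset.sum_congr rfl fun k _ => by rw [hdm]; ring
  have h10' : hmom N c' 1 0 = co * hmom N c 1 0 - s * hmom N c 0 1 := by
    unfold hmom
    rw [Finset.mul_sum, Finset.mul_sum, ← Finset.sum_sub_distrib]
    refine Finset.sum_congr rfl fun k _ => ?_
    rw [hdm]
    simp only [hc', rot, ← hs, ← hco]
    ring
  have h01' : hmom N c' 0 1 = s * hmom N c 1 0 + co * hmom N c 0 1 := by
    unfold hmom
    rw [Finset.mul_sum, Finset.mul_sum, ← Finset.sum_add_distrib]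
    refine Finset.sum_congr rfl fun k _ => ?_
    rw [hdm]
    simp only [hc', rot, ← hs, ← hco]
    ring
  have hu : ∀ k, (c' k).1 - hmom N c' 1 0 / hmom N c' 0 0
      = co * ((c k).1 - hmom N c 1 0 / hmom N c 0 0)
        - s * ((c k).2 - hmom N c 0 1 / hmom N c 0 0) := by
    intro k
    rw [h10', h00']
    simp only [hc', rot, ← hs, ← hco]
    field_simp
    ring
  have hv : ∀ k, (c' k).2 - hmom N c' 0 1 / hmom N c' 0 0
      = s * ((c k).1 - hmom N c 1 0 / hmom N c 0 0)
        + co * ((c k).2 - hmom N c 0 1 / hmom N c 0 0) := by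
    intro k
    rw [h01', h00']
    simp only [hc', rot, ← hs, ← hco]
    field_simp
    ring
  have e20 : eta N c' 2 0 = co ^ 2 * eta N c 2 0 - 2 * s * co * eta N c 1 1
      + s ^ 2 * eta N c 0 2 := by
    unfold eta
    rw [Finset.mul_sum, Finset.mul_sum, Finset.mul_sum, ← Finset.sum_sub_distrib,
      ← Finset.sum_add_distrib]
    refine Finset.sum_congr rfl fun k _ => ?_
    rw [hdm, hu k]
    ring
  have e02 : eta N c' 0 2 = s ^ 2 * eta N c 2 0 + 2 * s * co * eta N c 1 1
      + co ^ 2 * eta N c 0 2 := by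
    unfold eta
    rw [Finset.mul_sum, Finset.mul_sum, Finset.mul_sum, ← Finset.sum_add_distrib,
      ← Finset.sum_add_distrib]
    refine Finset.sum_congr rfl fun k _ => ?_
    rw [hdm, hv k]
    ring
  have e11 : eta N c' 1 1 = s * co * (eta N c 2 0 - eta N c 0 2)
      + (co ^ 2 - s ^ 2) * eta N c 1 1 := by
    unfold eta
    rw [← Finset.sum_sub_distrib, Finset.mul_sum, Finset.mul_sum, ← Finset.sum_add_distrib]
    refine Finset.sum_congr rfl fun k _ => ?_
    rw [hdm, hu k, hv k]
    ring
  show (eta N c' 2 0 - eta N c' 0 2) ^ 2 + 4 * (eta N c' 1 1) ^ 2 = _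
  rw [e20, e02, e11]
  linear_combination ((s ^ 2 + co ^ 2 + 1) *
    ((eta N c 2 0 - eta N c 0 2) ^ 2 + 4 * (eta N c 1 1) ^ 2)) * hsc
end

section
/- The contour moment φ₃ = (η_{30} − 3η_{12})² + (3η_{21} − η_{03})² is invariant under rotation: for every θ ∈ ℝ, if η'_{ij} denote the central contour moments of the rotated points R_θ(c_1),…,R_θ(c_N), then (η'_{30} − 3η'_{12})² + (3η'_{21} − η'_{03})² = (η_{30} − 3η_{12})² + (3η_{21} − η_{03})². -/
/-- Rotation invariance of the contour moment. -/
theorem phi3_rotation_invariant (N : ℕ) [NeZero N] (c : ZMod N → ℝ × ℝ)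
    (h00 : hmom N c 0 0 ≠ 0) (θ : ℝ) :
    (eta N (fun k => rot θ (c k)) 3 0 - 3 * eta N (fun k => rot θ (c k)) 1 2) ^ 2
        + (3 * eta N (fun k => rot θ (c k)) 2 1 - eta N (fun k => rot θ (c k)) 0 3) ^ 2
      = (eta N c 3 0 - 3 * eta N c 1 2) ^ 2 + (3 * eta N c 2 1 - eta N c 0 3) ^ 2 := by
  have hpy : Real.sin θ ^ 2 + Real.cos θ ^ 2 = 1 := Real.sin_sq_add_cos_sq θ
  have hdm : ∀ k : ZMod N, dm N (fun k => rot θ (c k)) k = dm N c k := by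
    intro k
    unfold dm rot
    congr 1
    linear_combination
      (((c k).1 - (c (k - 1)).1) ^ 2 + ((c k).2 - (c (k - 1)).2) ^ 2) *
        Real.sin_sq_add_cos_sq θ
  have h00' : hmom N (fun k => rot θ (c k)) 0 0 = hmom N c 0 0 := by
    unfold hmom
    refine Finset.sum_congr rfl fun k _ => ?_
    rw [hdm k]; ring
  have h10' : hmom N (fun k => rot θ (c k)) 1 0
      = Real.cos θ * hmom N c 1 0 - Real.sin θ * hmom N c 0 1 := by
    unfold hmom
    rw [Finset.mul_sum, Finset.mul_sum, ← Finset.sum_sub_distrib]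
    refine Finset.sum_congr rfl fun k _ => ?_
    rw [hdm k]; simp only [rot]; ring
  have h01' : hmom N (fun k => rot θ (c k)) 0 1
      = Real.sin θ * hmom N c 1 0 + Real.cos θ * hmom N c 0 1 := by
    unfold hmom
    rw [Finset.mul_sum, Finset.mul_sum, ← Finset.sum_add_distrib]
    refine Finset.sum_congr rfl fun k _ => ?_
    rw [hdm k]; simp only [rot]; ring
  have hX : ∀ k : ZMod N,
      (rot θ (c k)).1 - hmom N (fun k => rot θ (c k)) 1 0 / hmom N (fun k => rot θ (c k)) 0 0
        = Real.cos θ * ((c k).1 - hmom N c 1 0 / hmom N c 0 0)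
          - Real.sin θ * ((c k).2 - hmom N c 0 1 / hmom N c 0 0) := by
    intro k
    rw [h10', h00']
    simp only [rot]
    field_simp
    ring
  have hY : ∀ k : ZMod N,
      (rot θ (c k)).2 - hmom N (fun k => rot θ (c k)) 0 1 / hmom N (fun k => rot θ (c k)) 0 0
        = Real.sin θ * ((c k).1 - hmom N c 1 0 / hmom N c 0 0)
          + Real.cos θ * ((c k).2 - hmom N c 0 1 / hmom N c 0 0) := by
    intro k
    rw [h01', h00']
    simp only [rot]
    field_simp
    ring
  have key : ∀ i j : ℕ, eta N (fun k => rot θ (c k)) i j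
      = ∑ k : ZMod N,
          (Real.cos θ * ((c k).1 - hmom N c 1 0 / hmom N c 0 0)
            - Real.sin θ * ((c k).2 - hmom N c 0 1 / hmom N c 0 0)) ^ i *
          (Real.sin θ * ((c k).1 - hmom N c 1 0 / hmom N c 0 0)
            + Real.cos θ * ((c k).2 - hmom N c 0 1 / hmom N c 0 0)) ^ j * dm N c k := by
    intro i j
    unfold eta
    refine Finset.sum_congr rfl fun k _ => ?_
    simp only
    rw [hX k, hY k, hdm k]
  have e30 : eta N (fun k => rot θ (c k)) 3 0
      = Real.cos θ ^ 3 * eta N c 3 0 - 3 * Real.cos θ ^ 2 * Real.sin θ * eta N c 2 1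
        + 3 * Real.cos θ * Real.sin θ ^ 2 * eta N c 1 2 - Real.sin θ ^ 3 * eta N c 0 3 := by
    rw [key 3 0]
    unfold eta
    rw [Finset.mul_sum, Finset.mul_sum, Finset.mul_sum, Finset.mul_sum,
      ← Finset.sum_sub_distrib, ← Finset.sum_add_distrib, ← Finset.sum_sub_distrib]
    exact Finset.sum_congr rfl fun k _ => by ring
  have e21 : eta N (fun k => rot θ (c k)) 2 1
      = Real.cos θ ^ 2 * Real.sin θ * eta N c 3 0
        + (Real.cos θ ^ 3 - 2 * Real.cos θ * Real.sin θ ^ 2) * eta N c 2 1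
        + (Real.sin θ ^ 3 - 2 * Real.cos θ ^ 2 * Real.sin θ) * eta N c 1 2
        + Real.cos θ * Real.sin θ ^ 2 * eta N c 0 3 := by
    rw [key 2 1]
    unfold eta
    rw [Finset.mul_sum, Finset.mul_sum, Finset.mul_sum, Finset.mul_sum,
      ← Finset.sum_add_distrib, ← Finset.sum_add_distrib, ← Finset.sum_add_distrib]
    exact Finset.sum_congr rfl fun k _ => by ring
  have e12 : eta N (fun k => rot θ (c k)) 1 2
      = Real.cos θ * Real.sin θ ^ 2 * eta N c 3 0
        + (2 * Real.cos θ ^ 2 * Real.sin θ - Real.sin θ ^ 3) * eta N c 2 1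
        + (Real.cos θ ^ 3 - 2 * Real.cos θ * Real.sin θ ^ 2) * eta N c 1 2
        - Real.cos θ ^ 2 * Real.sin θ * eta N c 0 3 := by
    rw [key 1 2]
    unfold eta
    rw [Finset.mul_sum, Finset.mul_sum, Finset.mul_sum, Finset.mul_sum,
      ← Finset.sum_add_distrib, ← Finset.sum_add_distrib, ← Finset.sum_sub_distrib]
    exact Finset.sum_congr rfl fun k _ => by ring
  have e03 : eta N (fun k => rot θ (c k)) 0 3
      = Real.sin θ ^ 3 * eta N c 3 0 + 3 * Real.sin θ ^ 2 * Real.cos θ * eta N c 2 1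
        + 3 * Real.sin θ * Real.cos θ ^ 2 * eta N c 1 2 + Real.cos θ ^ 3 * eta N c 0 3 := by
    rw [key 0 3]
    unfold eta
    rw [Finset.mul_sum, Finset.mul_sum, Finset.mul_sum, Finset.mul_sum,
      ← Finset.sum_add_distrib, ← Finset.sum_add_distrib, ← Finset.sum_add_distrib]
    exact Finset.sum_congr rfl fun k _ => by ring
  rw [e30, e21, e12, e03]
  linear_combination
    ((eta N c 3 0 - 3 * eta N c 1 2) ^ 2 + (3 * eta N c 2 1 - eta N c 0 3) ^ 2) *
      ((Real.sin θ ^ 2 + Real.cos θ ^ 2) ^ 2 + (Real.sin θ ^ 2 + Real.cos θ ^ 2) + 1) * hpy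
end

section
/- The contour moment φ₄ = (η_{30} + η_{12})² + (η_{03} + η_{21})² is invariant under rotation: for every θ ∈ ℝ, if η'_{ij} denote the central contour moments of the rotated points R_θ(c_1),…,R_θ(c_N), then (η'_{30} + η'_{12})² + (η'_{03} + η'_{21})² = (η_{30} + η_{12})² + (η_{03} + η_{21})². -/
/-- Rotation invariance of the contour moment. -/
theorem phi4_rotation_invariant (N : ℕ) [NeZero N] (c : ZMod N → ℝ × ℝ)
    (h00 : hmom N c 0 0 ≠ 0) (θ : ℝ) :
    (eta N (fun k => rot θ (c k)) 3 0 + eta N (fun k => rot θ (c k)) 1 2) ^ 2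
        + (eta N (fun k => rot θ (c k)) 0 3 + eta N (fun k => rot θ (c k)) 2 1) ^ 2
      = (eta N c 3 0 + eta N c 1 2) ^ 2 + (eta N c 0 3 + eta N c 2 1) ^ 2 := by
  set s := Real.sin θ with hs
  set co := Real.cos θ with hco
  have hsc : s ^ 2 + co ^ 2 = 1 := Real.sin_sq_add_cos_sq θ
  set c' : ZMod N → ℝ × ℝ := fun k => rot θ (c k) with hc'
  have hdm : ∀ k, dm N c' k = dm N c k := by
    intro k
    unfold dm
    have h : ((c' k).1 - (c' (k - 1)).1) ^ 2 + ((c' k).2 - (c' (k - 1)).2) ^ 2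
        = ((c k).1 - (c (k - 1)).1) ^ 2 + ((c k).2 - (c (k - 1)).2) ^ 2 := by
      simp only [hc', rot]
      linear_combination (((c k).1 - (c (k - 1)).1) ^ 2 + ((c k).2 - (c (k - 1)).2) ^ 2) * hsc
    rw [h]
  have h00' : hmom N c' 0 0 = hmom N c 0 0 := by
    unfold hmom
    exact Finset.sum_congr rfl fun k _ => by rw [hdm k]; simp [hc', rot]
  have h10' : hmom N c' 1 0 = co * hmom N c 1 0 - s * hmom N c 0 1 := by
    unfold hmom
    rw [Finset.mul_sum, Finset.mul_sum, ← Finset.sum_sub_distrib]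
    refine Finset.sum_congr rfl fun k _ => ?_
    rw [hdm k]
    simp only [hc', rot]
    ring
  have h01' : hmom N c' 0 1 = s * hmom N c 1 0 + co * hmom N c 0 1 := by
    unfold hmom
    rw [Finset.mul_sum, Finset.mul_sum, ← Finset.sum_add_distrib]
    refine Finset.sum_congr rfl fun k _ => ?_
    rw [hdm k]
    simp only [hc', rot]
    ring
  have hub' : hmom N c' 1 0 / hmom N c' 0 0
      = co * (hmom N c 1 0 / hmom N c 0 0) - s * (hmom N c 0 1 / hmom N c 0 0) := by
    rw [h10', h00', sub_div, mul_div_assoc, mul_div_assoc]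
  have hvb' : hmom N c' 0 1 / hmom N c' 0 0
      = s * (hmom N c 1 0 / hmom N c 0 0) + co * (hmom N c 0 1 / hmom N c 0 0) := by
    rw [h01', h00', add_div, mul_div_assoc, mul_div_assoc]
  set ub := hmom N c 1 0 / hmom N c 0 0 with hub
  set vb := hmom N c 0 1 / hmom N c 0 0 with hvb
  have key1 : eta N c' 3 0 + eta N c' 1 2
      = co * (eta N c 3 0 + eta N c 1 2) - s * (eta N c 0 3 + eta N c 2 1) := by
    unfold eta
    rw [hub', hvb']
    simp only [Finset.mul_sum, ← Finset.sum_add_distrib, ← Finset.sum_sub_distrib]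
    refine Finset.sum_congr rfl fun k _ => ?_
    rw [hdm k]
    simp only [hc', rot]
    linear_combination ((co * ((c k).1 - ub) - s * ((c k).2 - vb)) *
      (((c k).1 - ub) ^ 2 + ((c k).2 - vb) ^ 2) * dm N c k) * hsc
  have key2 : eta N c' 0 3 + eta N c' 2 1
      = s * (eta N c 3 0 + eta N c 1 2) + co * (eta N c 0 3 + eta N c 2 1) := by
    unfold eta
    rw [hub', hvb']
    simp only [Finset.mul_sum, ← Finset.sum_add_distrib]
    refine Finset.sum_congr rfl fun k _ => ?_
    rw [hdm k]
    simp only [hc', rot]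
    linear_combination ((s * ((c k).1 - ub) + co * ((c k).2 - vb)) *
      (((c k).1 - ub) ^ 2 + ((c k).2 - vb) ^ 2) * dm N c k) * hsc
  rw [key1, key2]
  linear_combination ((eta N c 3 0 + eta N c 1 2) ^ 2 + (eta N c 0 3 + eta N c 2 1) ^ 2) * hsc
end

section
/- The contour moment φ₆ = (η_{20} − η_{02})[(η_{30} + η_{12})² − (η_{21} + η_{03})²] + 4η_{11}(η_{12} + η_{30})(η_{21} + η_{03}) is invariant under rotation: for every θ ∈ ℝ, computing the same expression from the central contour moments η'_{ij} of the rotated points R_θ(c_1),…,R_θ(c_N) yields the same value φ₆. -/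
/-! In complex coordinates `z = u + i v`, `φ₆` is the real part of `μ₀₂ μ₂₁²`, where
`μ_ab = Σ z^a z̄^b Δm`. Multiplying every point by `e^{iθ}` multiplies `μ_ab` by
`e^{i(a-b)θ}`, and the phases in `μ₀₂ μ₂₁²` cancel. Rotation preserves the arc-length
weights and commutes with taking the centroid, so the central moments of the rotated contour
are the moments of the rotated centred points. -/

open Complex ComplexConjugate

section Moments

variable {ι : Type*} [Fintype ι]

noncomputable def moment (w : ι → ℝ) (p : ι → ℝ × ℝ) (i j : ℕ) : ℝ :=
  ∑ k, (p k).1 ^ i * (p k).2 ^ j * w k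

noncomputable def complexMoment (w : ι → ℝ) (z : ι → ℂ) (a b : ℕ) : ℂ :=
  ∑ k, z k ^ a * conj (z k) ^ b * w k

lemma complexMoment_const_mul (w : ι → ℝ) (z : ι → ℂ) (u : ℂ) (a b : ℕ) :
    complexMoment w (fun k => u * z k) a b = u ^ a * conj u ^ b * complexMoment w z a b := by
  rw [complexMoment, complexMoment, Finset.mul_sum]
  refine Finset.sum_congr rfl fun k _ => ?_
  rw [map_mul]
  ring

lemma complexMoment_zero_two (w : ι → ℝ) (p : ι → ℝ × ℝ) :
    complexMoment w (fun k => equivRealProd.symm (p k)) 0 2 =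
      ⟨moment w p 2 0 - moment w p 0 2, -2 * moment w p 1 1⟩ := by
  apply Complex.ext <;>
  simp only [complexMoment, moment, re_sum, im_sum, Finset.mul_sum, ← Finset.sum_sub_distrib] <;>
  refine Finset.sum_congr rfl fun k _ => ?_ <;>
  simp only [equivRealProd_symm_apply, pow_zero, pow_one, pow_two, one_mul, map_add, map_mul,
    conj_ofReal, conj_I, mul_re, mul_im, add_re, add_im, ofReal_re, ofReal_im, I_re, I_im, neg_re,
    neg_im] <;>
  ring

lemma complexMoment_two_one (w : ι → ℝ) (p : ι → ℝ × ℝ) :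
    complexMoment w (fun k => equivRealProd.symm (p k)) 2 1 =
      ⟨moment w p 3 0 + moment w p 1 2, moment w p 2 1 + moment w p 0 3⟩ := by
  apply Complex.ext <;>
  simp only [complexMoment, moment, re_sum, im_sum, ← Finset.sum_add_distrib] <;>
  refine Finset.sum_congr rfl fun k _ => ?_ <;>
  simp only [equivRealProd_symm_apply, pow_zero, pow_one, pow_two, one_mul, map_add, map_mul,
    conj_ofReal, conj_I, mul_re, mul_im, add_re, add_im, ofReal_re, ofReal_im, I_re, I_im, neg_re,
    neg_im] <;>
  ring

def phi6 (m : ℕ → ℕ → ℝ) : ℝ :=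
  (m 2 0 - m 0 2) * ((m 3 0 + m 1 2) ^ 2 - (m 2 1 + m 0 3) ^ 2)
    + 4 * m 1 1 * (m 1 2 + m 3 0) * (m 2 1 + m 0 3)

lemma phi6_moment_eq_re (w : ι → ℝ) (p : ι → ℝ × ℝ) :
    phi6 (moment w p) =
      (complexMoment w (fun k => equivRealProd.symm (p k)) 0 2 *
        complexMoment w (fun k => equivRealProd.symm (p k)) 2 1 ^ 2).re := by
  rw [complexMoment_zero_two, complexMoment_two_one, phi6]
  simp only [mul_re, mul_im, pow_two]
  ring

lemma phi6_moment_const_mul (w : ι → ℝ) (p : ι → ℝ × ℝ) (u : ℂ) :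
    phi6 (moment w fun k => equivRealProd (u * equivRealProd.symm (p k))) =
      normSq u ^ 4 * phi6 (moment w p) := by
  simp only [phi6_moment_eq_re, Equiv.symm_apply_apply, complexMoment_const_mul]
  rw [← re_ofReal_mul]
  congr 1
  push_cast
  rw [← mul_conj]
  ring

lemma rot_eq_equivRealProd_exp_mul (θ : ℝ) (p : ℝ × ℝ) :
    rot θ p = equivRealProd (exp (θ * I) * equivRealProd.symm p) := by
  simp only [rot, exp_mul_I, ← ofReal_cos, ← ofReal_sin, equivRealProd_symm_apply,
    equivRealProd_apply, mul_re, mul_im, add_re, add_im, ofReal_re, ofReal_im, I_re, I_im,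
    Prod.mk.injEq]
  constructor <;> ring

lemma phi6_moment_rot (w : ι → ℝ) (p : ι → ℝ × ℝ) (θ : ℝ) :
    phi6 (moment w fun k => rot θ (p k)) = phi6 (moment w p) := by
  simp only [rot_eq_equivRealProd_exp_mul, phi6_moment_const_mul, normSq_eq_norm_sq,
    norm_exp_ofReal_mul_I, one_pow, one_mul]

end Moments

lemma rot_sub (θ : ℝ) (p q : ℝ × ℝ) : rot θ p - rot θ q = rot θ (p - q) := by
  ext <;> simp only [rot, Prod.fst_sub, Prod.snd_sub] <;> ring

section Contour

variable (N : ℕ) [NeZero N] (c : ZMod N → ℝ × ℝ) (θ : ℝ)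

lemma dm_rot : dm N (fun k => rot θ (c k)) = dm N c := by
  funext k
  unfold dm rot
  congr 1
  linear_combination (((c k).1 - (c (k - 1)).1) ^ 2 + ((c k).2 - (c (k - 1)).2) ^ 2) *
    Real.sin_sq_add_cos_sq θ

lemma hmom_rot_zero_zero : hmom N (fun k => rot θ (c k)) 0 0 = hmom N c 0 0 := by
  simp only [hmom, dm_rot, pow_zero, one_mul]

lemma hmom_rot_one_zero :
    hmom N (fun k => rot θ (c k)) 1 0 =
      hmom N c 1 0 * Real.cos θ - hmom N c 0 1 * Real.sin θ := by
  simp only [hmom, dm_rot, Finset.sum_mul, ← Finset.sum_sub_distrib]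
  exact Finset.sum_congr rfl fun k _ => by simp only [rot]; ring

lemma hmom_rot_zero_one :
    hmom N (fun k => rot θ (c k)) 0 1 =
      hmom N c 1 0 * Real.sin θ + hmom N c 0 1 * Real.cos θ := by
  simp only [hmom, dm_rot, Finset.sum_mul, ← Finset.sum_add_distrib]
  exact Finset.sum_congr rfl fun k _ => by simp only [rot]; ring

noncomputable def centroid : ℝ × ℝ :=
  (hmom N c 1 0 / hmom N c 0 0, hmom N c 0 1 / hmom N c 0 0)

lemma centroid_rot : centroid N (fun k => rot θ (c k)) = rot θ (centroid N c) := by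
  rw [centroid, centroid, hmom_rot_zero_zero, hmom_rot_one_zero, hmom_rot_zero_one]
  ext <;> simp only [rot] <;> ring

lemma eta_eq_moment : eta N c = moment (dm N c) fun k => c k - centroid N c := rfl

lemma eta_rot :
    eta N (fun k => rot θ (c k)) = moment (dm N c) fun k => rot θ (c k - centroid N c) := by
  simp only [eta_eq_moment, dm_rot, centroid_rot, rot_sub]

end Contour

theorem phi6_rotation_invariant_general (N : ℕ) [NeZero N] (c : ZMod N → ℝ × ℝ) (θ : ℝ) :
    (eta N (fun k => rot θ (c k)) 2 0 - eta N (fun k => rot θ (c k)) 0 2)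
        * ((eta N (fun k => rot θ (c k)) 3 0 + eta N (fun k => rot θ (c k)) 1 2) ^ 2
            - (eta N (fun k => rot θ (c k)) 2 1 + eta N (fun k => rot θ (c k)) 0 3) ^ 2)
      + 4 * eta N (fun k => rot θ (c k)) 1 1
        * (eta N (fun k => rot θ (c k)) 1 2 + eta N (fun k => rot θ (c k)) 3 0)
        * (eta N (fun k => rot θ (c k)) 2 1 + eta N (fun k => rot θ (c k)) 0 3)
    = (eta N c 2 0 - eta N c 0 2)
        * ((eta N c 3 0 + eta N c 1 2) ^ 2 - (eta N c 2 1 + eta N c 0 3) ^ 2)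
      + 4 * eta N c 1 1 * (eta N c 1 2 + eta N c 3 0) * (eta N c 2 1 + eta N c 0 3) := by
  change phi6 (eta N fun k => rot θ (c k)) = phi6 (eta N c)
  rw [eta_rot, eta_eq_moment, phi6_moment_rot]

/-- Rotation invariance of the contour moment `φ₆`. -/
theorem phi6_rotation_invariant (N : ℕ) [NeZero N] (c : ZMod N → ℝ × ℝ)
    (h00 : hmom N c 0 0 ≠ 0) (θ : ℝ) :
    (eta N (fun k => rot θ (c k)) 2 0 - eta N (fun k => rot θ (c k)) 0 2)
        * ((eta N (fun k => rot θ (c k)) 3 0 + eta N (fun k => rot θ (c k)) 1 2) ^ 2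
            - (eta N (fun k => rot θ (c k)) 2 1 + eta N (fun k => rot θ (c k)) 0 3) ^ 2)
      + 4 * eta N (fun k => rot θ (c k)) 1 1
        * (eta N (fun k => rot θ (c k)) 1 2 + eta N (fun k => rot θ (c k)) 3 0)
        * (eta N (fun k => rot θ (c k)) 2 1 + eta N (fun k => rot θ (c k)) 0 3)
    = (eta N c 2 0 - eta N c 0 2)
        * ((eta N c 3 0 + eta N c 1 2) ^ 2 - (eta N c 2 1 + eta N c 0 3) ^ 2)
      + 4 * eta N c 1 1 * (eta N c 1 2 + eta N c 3 0) * (eta N c 2 1 + eta N c 0 3) :=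
  phi6_rotation_invariant_general N c θ
end

section
/- The contour moment φ₇ = (3η_{21} − η_{03})(η_{30} + η_{12})[(η_{30} + η_{12})² − 3(η_{21} + η_{03})²] − (η_{30} − 3η_{12})(η_{21} + η_{03})[3(η_{30} + η_{12})² − (η_{21} + η_{03})²] is invariant under rotation: for every θ ∈ ℝ, computing the same expression from the central contour moments η'_{ij} of the rotated points R_θ(c_1),…,R_θ(c_N) yields the same value φ₇. -/
/-- Rotation invariance of the contour moment `φ₇`. -/
theorem phi7_rotation_invariant (N : ℕ) [NeZero N] (c : ZMod N → ℝ × ℝ)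
    (h00 : hmom N c 0 0 ≠ 0) (θ : ℝ) :
    (3 * eta N (fun k => rot θ (c k)) 2 1 - eta N (fun k => rot θ (c k)) 0 3)
        * (eta N (fun k => rot θ (c k)) 3 0 + eta N (fun k => rot θ (c k)) 1 2)
        * ((eta N (fun k => rot θ (c k)) 3 0 + eta N (fun k => rot θ (c k)) 1 2) ^ 2
            - 3 * (eta N (fun k => rot θ (c k)) 2 1 + eta N (fun k => rot θ (c k)) 0 3) ^ 2)
      - (eta N (fun k => rot θ (c k)) 3 0 - 3 * eta N (fun k => rot θ (c k)) 1 2)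
        * (eta N (fun k => rot θ (c k)) 2 1 + eta N (fun k => rot θ (c k)) 0 3)
        * (3 * (eta N (fun k => rot θ (c k)) 3 0 + eta N (fun k => rot θ (c k)) 1 2) ^ 2
            - (eta N (fun k => rot θ (c k)) 2 1 + eta N (fun k => rot θ (c k)) 0 3) ^ 2)
    = (3 * eta N c 2 1 - eta N c 0 3) * (eta N c 3 0 + eta N c 1 2)
        * ((eta N c 3 0 + eta N c 1 2) ^ 2 - 3 * (eta N c 2 1 + eta N c 0 3) ^ 2)
      - (eta N c 3 0 - 3 * eta N c 1 2) * (eta N c 2 1 + eta N c 0 3)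
        * (3 * (eta N c 3 0 + eta N c 1 2) ^ 2 - (eta N c 2 1 + eta N c 0 3) ^ 2) := by
  have hpy : Real.sin θ ^ 2 + Real.cos θ ^ 2 = 1 := Real.sin_sq_add_cos_sq θ
  set c' : ZMod N → ℝ × ℝ := fun k => rot θ (c k) with hc'
  set cθ := Real.cos θ with hcθ
  set sθ := Real.sin θ with hsθ
  -- arc-length weights are rotation invariant
  have hdm : ∀ k : ZMod N, dm N c' k = dm N c k := by
    intro k
    unfold dm
    congr 1
    simp only [hc', rot]
    linear_combination (((c k).1 - (c (k - 1)).1) ^ 2 + ((c k).2 - (c (k - 1)).2) ^ 2) * hpy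
  -- moments of order ≤ 1
  have h00' : hmom N c' 0 0 = hmom N c 0 0 := by
    unfold hmom
    exact Finset.sum_congr rfl fun k _ => by simp [hdm k]
  have h10' : hmom N c' 1 0 = cθ * hmom N c 1 0 - sθ * hmom N c 0 1 := by
    unfold hmom
    rw [Finset.mul_sum, Finset.mul_sum, ← Finset.sum_sub_distrib]
    refine Finset.sum_congr rfl fun k _ => ?_
    rw [hdm k]
    simp only [hc', rot]
    ring
  have h01' : hmom N c' 0 1 = sθ * hmom N c 1 0 + cθ * hmom N c 0 1 := by
    unfold hmom
    rw [Finset.mul_sum, Finset.mul_sum, ← Finset.sum_add_distrib]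
    refine Finset.sum_congr rfl fun k _ => ?_
    rw [hdm k]
    simp only [hc', rot]
    ring
  set ub := hmom N c 1 0 / hmom N c 0 0 with hub
  set vb := hmom N c 0 1 / hmom N c 0 0 with hvb
  have hub' : hmom N c' 1 0 / hmom N c' 0 0 = cθ * ub - sθ * vb := by
    rw [h10', h00', hub, hvb]; ring
  have hvb' : hmom N c' 0 1 / hmom N c' 0 0 = sθ * ub + cθ * vb := by
    rw [h01', h00', hub, hvb]; ring
  -- central moments of rotated contour as single sums over centered coordinates
  have Ecomb : ∀ i j : ℕ, eta N c' i j =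
      ∑ k : ZMod N, (cθ * ((c k).1 - ub) - sθ * ((c k).2 - vb)) ^ i
        * (sθ * ((c k).1 - ub) + cθ * ((c k).2 - vb)) ^ j * dm N c k := by
    intro i j
    unfold eta
    refine Finset.sum_congr rfl fun k _ => ?_
    rw [hdm k, hub', hvb']
    simp only [hc', rot]
    ring
  set A := eta N c 3 0 with hA
  set B := eta N c 2 1 with hB
  set D := eta N c 1 2 with hD
  set E := eta N c 0 3 with hE
  have E30 : eta N c' 3 0 = cθ^3*A - 3*cθ^2*sθ*B + 3*cθ*sθ^2*D - sθ^3*E := by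
    rw [Ecomb 3 0, hA, hB, hD, hE]
    unfold eta
    simp only [Finset.mul_sum, ← Finset.sum_sub_distrib, ← Finset.sum_add_distrib]
    exact Finset.sum_congr rfl fun k _ => by rw [hub, hvb]; ring
  have E21 : eta N c' 2 1 = cθ^2*sθ*A + (cθ^3 - 2*cθ*sθ^2)*B + (sθ^3 - 2*cθ^2*sθ)*D + cθ*sθ^2*E := by
    rw [Ecomb 2 1, hA, hB, hD, hE]
    unfold eta
    simp only [Finset.mul_sum, ← Finset.sum_sub_distrib, ← Finset.sum_add_distrib]
    exact Finset.sum_congr rfl fun k _ => by rw [hub, hvb]; ring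
  have E12 : eta N c' 1 2 = cθ*sθ^2*A + (2*cθ^2*sθ - sθ^3)*B + (cθ^3 - 2*cθ*sθ^2)*D - cθ^2*sθ*E := by
    rw [Ecomb 1 2, hA, hB, hD, hE]
    unfold eta
    simp only [Finset.mul_sum, ← Finset.sum_sub_distrib, ← Finset.sum_add_distrib]
    exact Finset.sum_congr rfl fun k _ => by rw [hub, hvb]; ring
  have E03 : eta N c' 0 3 = sθ^3*A + 3*cθ*sθ^2*B + 3*cθ^2*sθ*D + cθ^3*E := by
    rw [Ecomb 0 3, hA, hB, hD, hE]
    unfold eta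
    simp only [Finset.mul_sum, ← Finset.sum_sub_distrib, ← Finset.sum_add_distrib]
    exact Finset.sum_congr rfl fun k _ => by rw [hub, hvb]; ring
  rw [E30, E21, E12, E03]
  linear_combination ((8)*D^3*E + (-12)*B*D*E^2 + (12)*B*D^3 + (-24)*B^2*D*E + (-12)*B^3*D + (4)*A*E^3 + (12)*A*D^2*E + (24)*A*B*D^2 + (-12)*A*B^2*E + (-8)*A*B^3 + (12)*A^2*B*D + (-4)*A^3*E + (8)*sθ^2*D^3*E + (-12)*sθ^2*B*D*E^2 + (12)*sθ^2*B*D^3 + (-24)*sθ^2*B^2*D*E + (-12)*sθ^2*B^3*D + (4)*sθ^2*A*E^3 + (12)*sθ^2*A*D^2*E + (24)*sθ^2*A*B*D^2 + (-12)*sθ^2*A*B^2*E + (-8)*sθ^2*A*B^3 + (12)*sθ^2*A^2*B*D + (-4)*sθ^2*A^3*E + (8)*sθ^4*D^3*E + (-12)*sθ^4*B*D*E^2 + (12)*sθ^4*B*D^3 + (-24)*sθ^4*B^2*D*E + (-12)*sθ^4*B^3*D + (4)*sθ^4*A*E^3 + (12)*sθ^4*A*D^2*E + (24)*sθ^4*A*B*D^2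 + (-12)*sθ^4*A*B^2*E + (-8)*sθ^4*A*B^3 + (12)*sθ^4*A^2*B*D + (-4)*sθ^4*A^3*E + (8)*sθ^6*D^3*E + (-12)*sθ^6*B*D*E^2 + (12)*sθ^6*B*D^3 + (-24)*sθ^6*B^2*D*E + (-12)*sθ^6*B^3*D + (4)*sθ^6*A*E^3 + (12)*sθ^6*A*D^2*E + (24)*sθ^6*A*B*D^2 + (-12)*sθ^6*A*B^2*E + (-8)*sθ^6*A*B^3 + (12)*sθ^6*A^2*B*D + (-4)*sθ^6*A^3*E + (8)*sθ^8*D^3*E + (-12)*sθ^8*B*D*E^2 + (12)*sθ^8*B*D^3 + (-24)*sθ^8*B^2*D*E + (-12)*sθ^8*B^3*D + (4)*sθ^8*A*E^3 + (12)*sθ^8*A*D^2*E + (24)*sθ^8*A*B*D^2 + (-12)*sθ^8*A*B^2*E + (-8)*sθ^8*A*B^3 + (12)*sθ^8*A^2*B*D + (-4)*sθ^8*A^3*E + (8)*sθ^10*D^3*E + (-12)*sθ^10*B*D*E^2 + (12)*sθ^10*B*D^3 + (-24)*sθ^10*B^2*D*E + (-12)*sθ^10*B^3*D + (4)*sθ^10*A*E^3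 + (12)*sθ^10*A*D^2*E + (24)*sθ^10*A*B*D^2 + (-12)*sθ^10*A*B^2*E + (-8)*sθ^10*A*B^3 + (12)*sθ^10*A^2*B*D + (-4)*sθ^10*A^3*E + (8)*cθ^2*D^3*E + (-12)*cθ^2*B*D*E^2 + (12)*cθ^2*B*D^3 + (-24)*cθ^2*B^2*D*E + (-12)*cθ^2*B^3*D + (4)*cθ^2*A*E^3 + (12)*cθ^2*A*D^2*E + (24)*cθ^2*A*B*D^2 + (-12)*cθ^2*A*B^2*E + (-8)*cθ^2*A*B^3 + (12)*cθ^2*A^2*B*D + (-4)*cθ^2*A^3*E + (16)*cθ^2*sθ^2*D^3*E + (-24)*cθ^2*sθ^2*B*D*E^2 + (24)*cθ^2*sθ^2*B*D^3 + (-48)*cθ^2*sθ^2*B^2*D*E + (-24)*cθ^2*sθ^2*B^3*D + (8)*cθ^2*sθ^2*A*E^3 + (24)*cθ^2*sθ^2*A*D^2*E + (48)*cθ^2*sθ^2*A*B*D^2 + (-24)*cθ^2*sθ^2*A*B^2*E + (-16)*cθ^2*sθ^2*A*B^3 + (24)*cθ^2*sθ^2*A^2*B*D + (-8)*cθ^2*sθ^2*A^3*E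 + (24)*cθ^2*sθ^4*D^3*E + (-36)*cθ^2*sθ^4*B*D*E^2 + (36)*cθ^2*sθ^4*B*D^3 + (-72)*cθ^2*sθ^4*B^2*D*E + (-36)*cθ^2*sθ^4*B^3*D + (12)*cθ^2*sθ^4*A*E^3 + (36)*cθ^2*sθ^4*A*D^2*E + (72)*cθ^2*sθ^4*A*B*D^2 + (-36)*cθ^2*sθ^4*A*B^2*E + (-24)*cθ^2*sθ^4*A*B^3 + (36)*cθ^2*sθ^4*A^2*B*D + (-12)*cθ^2*sθ^4*A^3*E + (32)*cθ^2*sθ^6*D^3*E + (-48)*cθ^2*sθ^6*B*D*E^2 + (48)*cθ^2*sθ^6*B*D^3 + (-96)*cθ^2*sθ^6*B^2*D*E + (-48)*cθ^2*sθ^6*B^3*D + (16)*cθ^2*sθ^6*A*E^3 + (48)*cθ^2*sθ^6*A*D^2*E + (96)*cθ^2*sθ^6*A*B*D^2 + (-48)*cθ^2*sθ^6*A*B^2*E + (-32)*cθ^2*sθ^6*A*B^3 + (48)*cθ^2*sθ^6*A^2*B*D + (-16)*cθ^2*sθ^6*A^3*E + (40)*cθ^2*sθ^8*D^3*E + (-60)*cθ^2*sθ^8*B*D*E^2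 + (60)*cθ^2*sθ^8*B*D^3 + (-120)*cθ^2*sθ^8*B^2*D*E + (-60)*cθ^2*sθ^8*B^3*D + (20)*cθ^2*sθ^8*A*E^3 + (60)*cθ^2*sθ^8*A*D^2*E + (120)*cθ^2*sθ^8*A*B*D^2 + (-60)*cθ^2*sθ^8*A*B^2*E + (-40)*cθ^2*sθ^8*A*B^3 + (60)*cθ^2*sθ^8*A^2*B*D + (-20)*cθ^2*sθ^8*A^3*E + (8)*cθ^4*D^3*E + (-12)*cθ^4*B*D*E^2 + (12)*cθ^4*B*D^3 + (-24)*cθ^4*B^2*D*E + (-12)*cθ^4*B^3*D + (4)*cθ^4*A*E^3 + (12)*cθ^4*A*D^2*E + (24)*cθ^4*A*B*D^2 + (-12)*cθ^4*A*B^2*E + (-8)*cθ^4*A*B^3 + (12)*cθ^4*A^2*B*D + (-4)*cθ^4*A^3*E + (24)*cθ^4*sθ^2*D^3*E + (-36)*cθ^4*sθ^2*B*D*E^2 + (36)*cθ^4*sθ^2*B*D^3 + (-72)*cθ^4*sθ^2*B^2*D*E + (-36)*cθ^4*sθ^2*B^3*D + (12)*cθ^4*sθ^2*A*E^3 + (36)*cθ^4*sθ^2*A*D^2*E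 + (72)*cθ^4*sθ^2*A*B*D^2 + (-36)*cθ^4*sθ^2*A*B^2*E + (-24)*cθ^4*sθ^2*A*B^3 + (36)*cθ^4*sθ^2*A^2*B*D + (-12)*cθ^4*sθ^2*A^3*E + (48)*cθ^4*sθ^4*D^3*E + (-72)*cθ^4*sθ^4*B*D*E^2 + (72)*cθ^4*sθ^4*B*D^3 + (-144)*cθ^4*sθ^4*B^2*D*E + (-72)*cθ^4*sθ^4*B^3*D + (24)*cθ^4*sθ^4*A*E^3 + (72)*cθ^4*sθ^4*A*D^2*E + (144)*cθ^4*sθ^4*A*B*D^2 + (-72)*cθ^4*sθ^4*A*B^2*E + (-48)*cθ^4*sθ^4*A*B^3 + (72)*cθ^4*sθ^4*A^2*B*D + (-24)*cθ^4*sθ^4*A^3*E + (80)*cθ^4*sθ^6*D^3*E + (-120)*cθ^4*sθ^6*B*D*E^2 + (120)*cθ^4*sθ^6*B*D^3 + (-240)*cθ^4*sθ^6*B^2*D*E + (-120)*cθ^4*sθ^6*B^3*D + (40)*cθ^4*sθ^6*A*E^3 + (120)*cθ^4*sθ^6*A*D^2*E + (240)*cθ^4*sθ^6*A*B*D^2 +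 (-120)*cθ^4*sθ^6*A*B^2*E + (-80)*cθ^4*sθ^6*A*B^3 + (120)*cθ^4*sθ^6*A^2*B*D + (-40)*cθ^4*sθ^6*A^3*E + (8)*cθ^6*D^3*E + (-12)*cθ^6*B*D*E^2 + (12)*cθ^6*B*D^3 + (-24)*cθ^6*B^2*D*E + (-12)*cθ^6*B^3*D + (4)*cθ^6*A*E^3 + (12)*cθ^6*A*D^2*E + (24)*cθ^6*A*B*D^2 + (-12)*cθ^6*A*B^2*E + (-8)*cθ^6*A*B^3 + (12)*cθ^6*A^2*B*D + (-4)*cθ^6*A^3*E + (32)*cθ^6*sθ^2*D^3*E + (-48)*cθ^6*sθ^2*B*D*E^2 + (48)*cθ^6*sθ^2*B*D^3 + (-96)*cθ^6*sθ^2*B^2*D*E + (-48)*cθ^6*sθ^2*B^3*D + (16)*cθ^6*sθ^2*A*E^3 + (48)*cθ^6*sθ^2*A*D^2*E + (96)*cθ^6*sθ^2*A*B*D^2 + (-48)*cθ^6*sθ^2*A*B^2*E + (-32)*cθ^6*sθ^2*A*B^3 + (48)*cθ^6*sθ^2*A^2*B*D + (-16)*cθ^6*sθ^2*A^3*E + (80)*cθ^6*sθ^4*D^3*E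 + (-120)*cθ^6*sθ^4*B*D*E^2 + (120)*cθ^6*sθ^4*B*D^3 + (-240)*cθ^6*sθ^4*B^2*D*E + (-120)*cθ^6*sθ^4*B^3*D + (40)*cθ^6*sθ^4*A*E^3 + (120)*cθ^6*sθ^4*A*D^2*E + (240)*cθ^6*sθ^4*A*B*D^2 + (-120)*cθ^6*sθ^4*A*B^2*E + (-80)*cθ^6*sθ^4*A*B^3 + (120)*cθ^6*sθ^4*A^2*B*D + (-40)*cθ^6*sθ^4*A^3*E + (8)*cθ^8*D^3*E + (-12)*cθ^8*B*D*E^2 + (12)*cθ^8*B*D^3 + (-24)*cθ^8*B^2*D*E + (-12)*cθ^8*B^3*D + (4)*cθ^8*A*E^3 + (12)*cθ^8*A*D^2*E + (24)*cθ^8*A*B*D^2 + (-12)*cθ^8*A*B^2*E + (-8)*cθ^8*A*B^3 + (12)*cθ^8*A^2*B*D + (-4)*cθ^8*A^3*E + (40)*cθ^8*sθ^2*D^3*E + (-60)*cθ^8*sθ^2*B*D*E^2 + (60)*cθ^8*sθ^2*B*D^3 + (-120)*cθ^8*sθ^2*B^2*D*E + (-60)*cθ^8*sθ^2*B^3*D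 + (20)*cθ^8*sθ^2*A*E^3 + (60)*cθ^8*sθ^2*A*D^2*E + (120)*cθ^8*sθ^2*A*B*D^2 + (-60)*cθ^8*sθ^2*A*B^2*E + (-40)*cθ^8*sθ^2*A*B^3 + (60)*cθ^8*sθ^2*A^2*B*D + (-20)*cθ^8*sθ^2*A^3*E + (8)*cθ^10*D^3*E + (-12)*cθ^10*B*D*E^2 + (12)*cθ^10*B*D^3 + (-24)*cθ^10*B^2*D*E + (-12)*cθ^10*B^3*D + (4)*cθ^10*A*E^3 + (12)*cθ^10*A*D^2*E + (24)*cθ^10*A*B*D^2 + (-12)*cθ^10*A*B^2*E + (-8)*cθ^10*A*B^3 + (12)*cθ^10*A^2*B*D + (-4)*cθ^10*A^3*E) * hpy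
end
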